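/- If a superoperator Φ on operators of a finite-dimensional Hilbert space is Hermitian-preserving (Φ(A†) = Φ(A)† for all A), then with Φ̃ constructed as the controlled dilation above, Tr_anc[(X ⊗ 1) · Φ̃(|+⟩⟨+| ⊗ ρ)] = Φ(ρ) for every state ρ. -/

import Mathlib

open Matrix
open scoped Kronecker ComplexOrder

variable {d : ℕ}

/-- The controlled unitary `W = |0⟩⟨0| ⊗ U + |1⟩⟨1| ⊗ V`. -/
def ctrlW (U V : Matrix (Fin d) (Fin d) ℂ) : Matrix (Fin 2 × Fin d) (Fin 2 × Fin d) ℂ :=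
  fun p q => if p.1 = q.1 then (if p.1 = 0 then U p.2 q.2 else V p.2 q.2) else 0

def pauliX : Matrix (Fin 2) (Fin 2) ℂ := !![0, 1; 1, 0]

noncomputable def plusState : Matrix (Fin 2) (Fin 2) ℂ := (1/2 : ℂ) • !![1, 1; 1, 1]

/-- Partial trace over the ancilla qubit. -/
noncomputable def ptraceAnc (C : Matrix (Fin 2 × Fin d) (Fin 2 × Fin d) ℂ) :
    Matrix (Fin d) (Fin d) ℂ :=
  fun a b => ∑ j : Fin 2, C (j, a) (j, b)

/-!
With `W₀ = U`, `W₁ = V`, the dilated state is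
`W (|+⟩⟨+| ⊗ ρ) W† = ½ ∑ⱼₖ |j⟩⟨k| ⊗ Wⱼ ρ Wₖ†`, so `Tr_anc[(X ⊗ 1) ·]` keeps only the two
off-diagonal blocks and yields `½ (U ρ V† + V ρ U†)`. Averaging over the Kraus pairs gives
`½ (Φ(ρ) + Φ'(ρ))` with `Φ'` the map with `U` and `V` exchanged, and `Φ'(ρ) = Φ(ρ†)† = Φ(ρ)`
by Hermitian preservation, since `ρ = ρ†`.
-/

lemma ctrlW_apply (U V : Matrix (Fin d) (Fin d) ℂ) (j k : Fin 2) (a b : Fin d) :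
    ctrlW U V (j, a) (k, b) = if j = k then ![U, V] j a b else 0 := by
  fin_cases j <;> simp [ctrlW]

lemma plusState_apply (j k : Fin 2) : plusState j k = 2⁻¹ := by
  fin_cases j <;> fin_cases k <;> simp [plusState]

lemma ctrlW_mul_plusState_kronecker_mul_conjTranspose_apply (U V ρ : Matrix (Fin d) (Fin d) ℂ)
    (j k : Fin 2) (a b : Fin d) :
    (ctrlW U V * (plusState ⊗ₖ ρ) * (ctrlW U V)ᴴ) (j, a) (k, b)
      = 2⁻¹ * (![U, V] j * ρ * (![U, V] k)ᴴ) a b := by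
  simp only [mul_apply, Fintype.sum_prod_type, conjTranspose_apply, ctrlW_apply,
    kroneckerMap_apply, plusState_apply]
  fin_cases k <;> simp [Finset.mul_sum, Finset.sum_mul, mul_left_comm, mul_assoc]

lemma ptraceAnc_pauliX_kronecker_one_mul (C : Matrix (Fin 2 × Fin d) (Fin 2 × Fin d) ℂ) :
    ptraceAnc ((pauliX ⊗ₖ (1 : Matrix (Fin d) (Fin d) ℂ)) * C)
      = of fun a b => C (1, a) (0, b) + C (0, a) (1, b) := by
  ext a b
  simp [ptraceAnc, mul_apply, Fintype.sum_prod_type, pauliX, one_apply, add_comm]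

lemma ptraceAnc_sum {ι : Type*} (s : Finset ι) (C : ι → Matrix (Fin 2 × Fin d) (Fin 2 × Fin d) ℂ) :
    ptraceAnc (∑ i ∈ s, C i) = ∑ i ∈ s, ptraceAnc (C i) := by
  ext a b
  simp only [ptraceAnc, Matrix.sum_apply]
  exact Finset.sum_comm

lemma ptraceAnc_smul (c : ℂ) (C : Matrix (Fin 2 × Fin d) (Fin 2 × Fin d) ℂ) :
    ptraceAnc (c • C) = c • ptraceAnc C := by
  ext a b
  simp [ptraceAnc, mul_add]

lemma ptraceAnc_pauliX_mul_hadamard (U V ρ : Matrix (Fin d) (Fin d) ℂ) :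
    ptraceAnc ((pauliX ⊗ₖ (1 : Matrix (Fin d) (Fin d) ℂ))
        * (ctrlW U V * (plusState ⊗ₖ ρ) * (ctrlW U V)ᴴ))
      = (2⁻¹ : ℂ) • (U * ρ * Vᴴ + V * ρ * Uᴴ) := by
  ext a b
  simp [ptraceAnc_pauliX_kronecker_one_mul, ctrlW_mul_plusState_kronecker_mul_conjTranspose_apply,
    mul_add, add_comm]

section SandwichSum

variable {ι n : Type*} [Fintype ι] [Fintype n]

def sandwichSum (p : ι → ℝ) (U V : ι → Matrix n n ℂ) (A : Matrix n n ℂ) : Matrix n n ℂ :=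
  ∑ i, (p i : ℂ) • (U i * A * (V i)ᴴ)

lemma conjTranspose_sandwichSum (p : ι → ℝ) (U V : ι → Matrix n n ℂ) (A : Matrix n n ℂ) :
    (sandwichSum p U V A)ᴴ = sandwichSum p V U Aᴴ := by
  simp [sandwichSum, conjTranspose_sum, conjTranspose_smul, Matrix.mul_assoc]

lemma sandwichSum_swap_of_isHermitian {p : ι → ℝ} {U V : ι → Matrix n n ℂ}
    (hHP : ∀ A, sandwichSum p U V Aᴴ = (sandwichSum p U V A)ᴴ)
    {A : Matrix n n ℂ} (hA : A.IsHermitian) :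
    sandwichSum p V U A = sandwichSum p U V A := by
  conv_lhs => rw [← hA.eq]
  rw [← conjTranspose_sandwichSum, ← hHP, hA.eq]

end SandwichSum

theorem hadamard_test_hermitian_preserving_general {d m : ℕ}
    (p : Fin m → ℝ)
    (U V : Fin m → Matrix (Fin d) (Fin d) ℂ)
    (hHP : ∀ A : Matrix (Fin d) (Fin d) ℂ,
      (∑ i, (p i : ℂ) • (U i * Aᴴ * (V i)ᴴ)) = (∑ i, (p i : ℂ) • (U i * A * (V i)ᴴ))ᴴ)
    (ρ : Matrix (Fin d) (Fin d) ℂ) (hρ : ρ.PosSemidef) :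
    ptraceAnc ((pauliX ⊗ₖ (1 : Matrix (Fin d) (Fin d) ℂ))
        * (∑ i, (p i : ℂ) •
            (ctrlW (U i) (V i) * (plusState ⊗ₖ ρ) * (ctrlW (U i) (V i))ᴴ)))
      = ∑ i, (p i : ℂ) • (U i * ρ * (V i)ᴴ) := by
  have hswap : sandwichSum p V U ρ = sandwichSum p U V ρ :=
    sandwichSum_swap_of_isHermitian hHP hρ.isHermitian
  calc _ = ∑ i, (p i : ℂ) • (2⁻¹ : ℂ) • (U i * ρ * (V i)ᴴ + V i * ρ * (U i)ᴴ) := by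
        simp only [Finset.mul_sum, mul_smul_comm, ptraceAnc_sum, ptraceAnc_smul,
          ptraceAnc_pauliX_mul_hadamard]
    _ = (2⁻¹ : ℂ) • (sandwichSum p U V ρ + sandwichSum p V U ρ) := by
        simp only [sandwichSum, smul_add, Finset.smul_sum, Finset.sum_add_distrib,
          smul_comm (2⁻¹ : ℂ)]
    _ = sandwichSum p U V ρ := by
        rw [hswap]; module

/-- If `Φ(•) = ∑ᵢ pᵢ Uᵢ • Vᵢ†` is Hermitian-preserving, then measuring only `X` on the ancilla
of the controlled dilation recovers `Φ(ρ)`: `Tr_anc[(X⊗1)·Φ̃(|+⟩⟨+|⊗ρ)] = Φ(ρ)`. -/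
theorem hadamard_test_hermitian_preserving {d m : ℕ}
    (p : Fin m → ℝ) (hp : ∀ i, 0 ≤ p i) (hpsum : ∑ i, p i = 1)
    (U V : Fin m → Matrix (Fin d) (Fin d) ℂ)
    (hU : ∀ i, (U i)ᴴ * U i = 1 ∧ U i * (U i)ᴴ = 1)
    (hV : ∀ i, (V i)ᴴ * V i = 1 ∧ V i * (V i)ᴴ = 1)
    (hHP : ∀ A : Matrix (Fin d) (Fin d) ℂ,
      (∑ i, (p i : ℂ) • (U i * Aᴴ * (V i)ᴴ)) = (∑ i, (p i : ℂ) • (U i * A * (V i)ᴴ))ᴴ)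
    (ρ : Matrix (Fin d) (Fin d) ℂ) (hρ : ρ.PosSemidef) (hρtr : ρ.trace = 1) :
    ptraceAnc ((pauliX ⊗ₖ (1 : Matrix (Fin d) (Fin d) ℂ))
        * (∑ i, (p i : ℂ) •
            (ctrlW (U i) (V i) * (plusState ⊗ₖ ρ) * (ctrlW (U i) (V i))ᴴ)))
      = ∑ i, (p i : ℂ) • (U i * ρ * (V i)ᴴ) :=
  hadamard_test_hermitian_preserving_general p U V hHP ρ hρ
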